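/- Let 1 ≤ p ≤ 2. If for all points x1,…,xn ∈ ℝ and all reals a1,…,an with Σ aᵢ = 0 one has Σᵢⱼ aᵢaⱼ |xᵢ − xⱼ|^p ≤ 0 (conditional negative definiteness of d^p on ℝ), then for measures μ1,…,μn on the half-plane with finite p-persistence and weights a1,…,an with Σ aᵢ = 0, Σᵢⱼ aᵢaⱼ SFG_p^p(μᵢ, μⱼ) ≤ 0, where SFG_p^p(μ,ν) = (1/√2^p) ∫_ℝ ∫_{ℝ₊} |F_{π_t#μ̃}⁻¹(s) − F_{π_t#ν̃}⁻¹(s)|^p ds dt. -/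

import Mathlib

open MeasureTheory
open Set ENNReal

/-- The projection onto the geodesic with parameter `t`, recorded through the distance of the
projected point to the diagonal: a point `z = (z1,z2)` of the half-plane projects off the
diagonal iff `z1 ≤ t ≤ z2`, in which case it lands at distance `(z2−z1)/√2` from the diagonal. -/
noncomputable def projDist (t : ℝ) (z : ℝ × ℝ) : ℝ :=
  if z.1 ≤ t ∧ t ≤ z.2 then (z.2 - z.1) / Real.sqrt 2 else 0

/-- The normalization `dμ̃(z) = dμ(z)/d(z,Δ)` of a persistence measure,
where `d(z,Δ) = (z2−z1)/√2`. -/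
noncomputable def normalizePM (μ : Measure (ℝ × ℝ)) : Measure (ℝ × ℝ) :=
  μ.withDensity fun z => ENNReal.ofReal (Real.sqrt 2 / (z.2 - z.1))

/-- Generalized inverse of the reversed distribution function `x ↦ ν([x,∞))`,
with `sup ∅ = 0` (real supremum). -/
noncomputable def Finv (ν : Measure ℝ) (m : ℝ) : ℝ :=
  sSup {t : ℝ | 0 ≤ t ∧ ENNReal.ofReal m ≤ ν (Set.Ici t)}

lemma measurable_projDist_uncurry :
    Measurable fun q : ℝ × (ℝ × ℝ) => projDist q.1 q.2 := by
  unfold projDist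
  apply Measurable.ite
  · exact (measurableSet_le measurable_snd.fst measurable_fst).inter
      (measurableSet_le measurable_fst measurable_snd.snd)
  · exact (measurable_snd.snd.sub measurable_snd.fst).div_const _
  · exact measurable_const

lemma measurable_projDist (t : ℝ) : Measurable (projDist t) :=
  measurable_projDist_uncurry.comp measurable_prodMk_left

lemma projDist_nonneg (t : ℝ) (z : ℝ × ℝ) : 0 ≤ projDist t z := by
  unfold projDist
  split
  · next h =>
    have : z.1 ≤ z.2 := h.1.trans h.2
    exact div_nonneg (sub_nonneg.mpr this) (Real.sqrt_nonneg 2)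
  · exact le_refl 0

lemma Finv_nonneg (ν : Measure ℝ) (m : ℝ) : 0 ≤ Finv ν m :=
  Real.sSup_nonneg fun _ hx => hx.1

lemma Finv_lt_iff (ν : Measure ℝ) (s x : ℝ) (hx : 0 ≤ x) :
    x < Finv ν s ↔ BddAbove {t : ℝ | 0 ≤ t ∧ ENNReal.ofReal s ≤ ν (Set.Ici t)} ∧
      ∃ q : ℚ, x < (q : ℝ) ∧ ENNReal.ofReal s ≤ ν (Set.Ici (q : ℝ)) := by
  set S := {t : ℝ | 0 ≤ t ∧ ENNReal.ofReal s ≤ ν (Set.Ici t)} with hS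
  constructor
  · intro h
    have hne : S.Nonempty := by
      by_contra hne
      rw [Set.not_nonempty_iff_eq_empty] at hne
      rw [Finv, ← hS, hne, Real.sSup_empty] at h
      exact absurd h (not_lt.mpr hx)
    have hbdd : BddAbove S := by
      by_contra hbdd
      rw [Finv, ← hS, Real.sSup_of_not_bddAbove hbdd] at h
      exact absurd h (not_lt.mpr hx)
    refine ⟨hbdd, ?_⟩
    obtain ⟨r, hrS, hxr⟩ := (lt_csSup_iff hbdd hne).mp h
    obtain ⟨q, hq1, hq2⟩ := exists_rat_btwn hxr
    exact ⟨q, hq1, le_trans hrS.2 (measure_mono (Set.Ici_subset_Ici.mpr hq2.le))⟩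
  · rintro ⟨hbdd, q, hq1, hq2⟩
    have hqS : (q : ℝ) ∈ S := ⟨hx.trans hq1.le, hq2⟩
    exact lt_of_lt_of_le hq1 (le_csSup hbdd hqS)

lemma sigmaFinite_of_pers (p : ℝ) (hp : 0 < p) (μ : Measure (ℝ × ℝ))
    (hΩ : μ {z : ℝ × ℝ | ¬ z.1 < z.2} = 0)
    (hpers : ∫⁻ z, ENNReal.ofReal (((z.2 - z.1) / Real.sqrt 2) ^ p) ∂μ < ⊤) :
    SigmaFinite μ := by
  set f := fun z : ℝ × ℝ => ENNReal.ofReal (((z.2 - z.1) / Real.sqrt 2) ^ p) with hf_def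
  have hf : Measurable f := by
    apply Measurable.ennreal_ofReal
    exact ((measurable_snd.sub measurable_fst).div_const _).pow measurable_const
  set S : ℕ → Set (ℝ × ℝ) := fun n => match n with
    | 0 => {z : ℝ × ℝ | ¬ z.1 < z.2}
    | (m + 1) => {z | ((m + 1 : ℕ) : ℝ≥0∞)⁻¹ ≤ f z} with hS
  refine ⟨⟨⟨S, fun _ => trivial, ?_, ?_⟩⟩⟩
  · rintro (_ | m)
    · show μ {z : ℝ × ℝ | ¬ z.1 < z.2} < ⊤
      rw [hΩ]
      exact ENNReal.zero_lt_top
    · have key := mul_meas_ge_le_lintegral₀ (μ := μ) hf.aemeasurable (((m + 1 : ℕ) : ℝ≥0∞)⁻¹)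
      have hε0 : (((m + 1 : ℕ) : ℝ≥0∞))⁻¹ ≠ 0 := by simp
      have hεt : (((m + 1 : ℕ) : ℝ≥0∞))⁻¹ ≠ ⊤ := by simp
      by_contra h
      rw [not_lt, top_le_iff] at h
      rw [show {z | ((m + 1 : ℕ) : ℝ≥0∞)⁻¹ ≤ f z} = {x | ((m + 1 : ℕ) : ℝ≥0∞)⁻¹ ≤ f x} from rfl,
        h, ENNReal.mul_top hε0] at key
      exact lt_irrefl ⊤ (lt_of_le_of_lt key hpers)
  · ext z
    simp only [Set.mem_iUnion, Set.mem_univ, iff_true]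
    by_cases h : z.1 < z.2
    · have hfz : f z ≠ 0 := by
        rw [hf_def]
        simp only [ne_eq, ENNReal.ofReal_eq_zero, not_le]
        exact Real.rpow_pos_of_pos (div_pos (sub_pos.mpr h) (Real.sqrt_pos.mpr (by norm_num))) p
      obtain ⟨k, hk⟩ := ENNReal.exists_inv_nat_lt hfz
      refine ⟨k + 1, ?_⟩
      show ((k + 1 : ℕ) : ℝ≥0∞)⁻¹ ≤ f z
      exact le_trans (ENNReal.inv_le_inv.mpr (by exact_mod_cast Nat.le_succ k)) hk.le
    · exact ⟨0, h⟩

lemma map_projDist_Ici (ρ : Measure (ℝ × ℝ)) (t x : ℝ) :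
    Measure.map (projDist t) ρ (Set.Ici x) = ρ {z | x ≤ projDist t z} := by
  rw [Measure.map_apply (measurable_projDist t) measurableSet_Ici]
  rfl

lemma measurable_H (ρ : Measure (ℝ × ℝ)) [SFinite ρ] (x : ℝ) :
    Measurable fun t => Measure.map (projDist t) ρ (Set.Ici x) := by
  simp only [map_projDist_Ici]
  have hA : MeasurableSet {q : ℝ × (ℝ × ℝ) | x ≤ projDist q.1 q.2} :=
    measurableSet_le measurable_const measurable_projDist_uncurry
  exact measurable_measure_prodMk_left (ν := ρ) hA

lemma measurable_Finv_proj (ρ : Measure (ℝ × ℝ)) [SFinite ρ] :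
    Measurable fun q : ℝ × ℝ => Finv (Measure.map (projDist q.1) ρ) q.2 := by
  set F : ℝ × ℝ → ℝ := fun q => Finv (Measure.map (projDist q.1) ρ) q.2 with hF
  apply measurable_of_Ioi
  intro x
  by_cases hx : 0 ≤ x
  · have hset : F ⁻¹' Set.Ioi x =
        ({q : ℝ × ℝ | BddAbove {t : ℝ | 0 ≤ t ∧
            ENNReal.ofReal q.2 ≤ Measure.map (projDist q.1) ρ (Set.Ici t)}} ∩
          ⋃ (r : ℚ) (_ : x < (r : ℝ)),
            {q : ℝ × ℝ | ENNReal.ofReal q.2 ≤ Measure.map (projDist q.1) ρ (Set.Ici (r : ℝ))}) := by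
      ext q
      simp only [Set.mem_preimage, Set.mem_Ioi, Set.mem_inter_iff, Set.mem_iUnion,
        Set.mem_setOf_eq]
      rw [hF]
      simp only []
      rw [Finv_lt_iff _ _ _ hx]
      constructor
      · rintro ⟨hb, r, h1, h2⟩; exact ⟨hb, r, h1, h2⟩
      · rintro ⟨hb, r, h1, h2⟩; exact ⟨hb, r, h1, h2⟩
    rw [hset]
    apply MeasurableSet.inter
    · -- BddAbove set is measurable
      have hbdd_iff : ∀ q : ℝ × ℝ,
          BddAbove {t : ℝ | 0 ≤ t ∧
            ENNReal.ofReal q.2 ≤ Measure.map (projDist q.1) ρ (Set.Ici t)} ↔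
          ∃ M : ℕ, ∀ r : ℚ, (M : ℝ) < (r : ℝ) →
            ¬ ENNReal.ofReal q.2 ≤ Measure.map (projDist q.1) ρ (Set.Ici (r : ℝ)) := by
        intro q
        constructor
        · rintro ⟨b, hb⟩
          obtain ⟨M, hM⟩ := exists_nat_ge b
          refine ⟨M, fun r hr hcon => ?_⟩
          have hrS : (r : ℝ) ∈ {t : ℝ | 0 ≤ t ∧
              ENNReal.ofReal q.2 ≤ Measure.map (projDist q.1) ρ (Set.Ici t)} :=
            ⟨le_trans (Nat.cast_nonneg M) hr.le, hcon⟩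
          exact absurd (le_trans (hb hrS) hM) (not_le.mpr hr)
        · rintro ⟨M, hM⟩
          refine ⟨(M : ℝ) + 1, fun r hrS => ?_⟩
          by_contra hcon
          push_neg at hcon
          have hMr : (M : ℝ) < r := by linarith
          obtain ⟨s, hs1, hs2⟩ := exists_rat_btwn hMr
          have : ENNReal.ofReal q.2 ≤ Measure.map (projDist q.1) ρ (Set.Ici (s : ℝ)) :=
            le_trans hrS.2 (measure_mono (Set.Ici_subset_Ici.mpr hs2.le))
          exact hM s hs1 this
      have : {q : ℝ × ℝ | BddAbove {t : ℝ | 0 ≤ t ∧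
          ENNReal.ofReal q.2 ≤ Measure.map (projDist q.1) ρ (Set.Ici t)}} =
          ⋃ (M : ℕ), ⋂ (r : ℚ),
            {q : ℝ × ℝ | (M : ℝ) < (r : ℝ) →
              ¬ ENNReal.ofReal q.2 ≤ Measure.map (projDist q.1) ρ (Set.Ici (r : ℝ))} := by
        ext q
        simp only [Set.mem_setOf_eq, Set.mem_iUnion, Set.mem_iInter]
        rw [hbdd_iff q]
      rw [this]
      apply MeasurableSet.iUnion
      intro M
      apply MeasurableSet.iInter
      intro r
      by_cases hMr : (M : ℝ) < (r : ℝ)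
      · simp only [hMr, true_implies]
        exact (measurableSet_le (ENNReal.measurable_ofReal.comp measurable_snd)
          ((measurable_H ρ (r : ℝ)).comp measurable_fst)).compl
      · simp only [hMr, false_implies, Set.setOf_true]
        exact MeasurableSet.univ
    · apply MeasurableSet.iUnion
      intro r
      apply MeasurableSet.iUnion
      intro _
      exact measurableSet_le (ENNReal.measurable_ofReal.comp measurable_snd)
        ((measurable_H ρ (r : ℝ)).comp measurable_fst)
  · have : F ⁻¹' Set.Ioi x = Set.univ := by
      ext q
      simp only [Set.mem_preimage, Set.mem_Ioi, Set.mem_univ, iff_true]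
      exact lt_of_lt_of_le (not_le.mp hx) (Finv_nonneg _ _)
    rw [this]
    exact MeasurableSet.univ

lemma meas_levelset_le (ν : Measure ℝ) {x : ℝ} (hx : 0 < x) :
    (volume.restrict (Set.Ioi (0 : ℝ))) {s | x < Finv ν s} ≤ ν (Set.Ioi x) := by
  set m := ν (Set.Ioi x) with hm
  have hsub : {s : ℝ | x < Finv ν s} ∩ Set.Ioi (0 : ℝ) ⊆ {s : ℝ | ENNReal.ofReal s ≤ m} := by
    rintro s ⟨hs1, _⟩
    obtain ⟨-, q, hq1, hq2⟩ := (Finv_lt_iff ν s x hx.le).mp hs1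
    exact le_trans hq2 (measure_mono fun y hy => lt_of_lt_of_le hq1 hy)
  rw [Measure.restrict_apply' measurableSet_Ioi]
  rcases eq_top_or_lt_top m with hmt | hmt
  · rw [hmt]; exact le_top
  · calc volume ({s : ℝ | x < Finv ν s} ∩ Set.Ioi (0 : ℝ))
        ≤ volume ({s : ℝ | ENNReal.ofReal s ≤ m} ∩ Set.Ioi (0 : ℝ)) :=
          measure_mono fun s hs => ⟨hsub hs, hs.2⟩
      _ ≤ volume (Set.Ioc (0 : ℝ) m.toReal) := by
          apply measure_mono
          rintro s ⟨hs1, hs2⟩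
          exact ⟨hs2, (ENNReal.ofReal_le_iff_le_toReal hmt.ne).mp hs1⟩
      _ = ENNReal.ofReal m.toReal := by rw [Real.volume_Ioc, sub_zero]
      _ = m := ENNReal.ofReal_toReal hmt.ne

lemma key_finiteness (p : ℝ) (hp1 : 1 ≤ p) (μ : Measure (ℝ × ℝ)) [SigmaFinite μ]
    (hΩ : μ {z : ℝ × ℝ | ¬ z.1 < z.2} = 0) :
    ∫⁻ q : ℝ × ℝ, ENNReal.ofReal
        ((Finv (Measure.map (projDist q.1) (normalizePM μ)) q.2) ^ p)
      ∂((volume : Measure ℝ).prod (volume.restrict (Set.Ioi (0 : ℝ))))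
      ≤ ENNReal.ofReal (Real.sqrt 2) *
        ∫⁻ z, ENNReal.ofReal (((z.2 - z.1) / Real.sqrt 2) ^ p) ∂μ := by
  have hp0 : (0 : ℝ) < p := lt_of_lt_of_le one_pos hp1
  haveI hρsf : SigmaFinite (normalizePM μ) := by
    unfold normalizePM; infer_instance
  set ρ := normalizePM μ with hρ
  have hFmeas : Measurable fun q : ℝ × ℝ => Finv (Measure.map (projDist q.1) ρ) q.2 :=
    measurable_Finv_proj ρ
  have hdens : Measurable fun z : ℝ × ℝ => ENNReal.ofReal (Real.sqrt 2 / (z.2 - z.1)) :=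
    (measurable_const.div (measurable_snd.sub measurable_fst)).ennreal_ofReal
  have hproj_pow : Measurable fun q : ℝ × (ℝ × ℝ) =>
      ENNReal.ofReal ((projDist q.1 q.2) ^ p) :=
    (measurable_projDist_uncurry.pow measurable_const).ennreal_ofReal
  -- inner bound for each t
  have inner : ∀ t : ℝ, ∫⁻ s in Set.Ioi (0 : ℝ),
      ENNReal.ofReal ((Finv (Measure.map (projDist t) ρ) s) ^ p)
      ≤ ∫⁻ z, ENNReal.ofReal (Real.sqrt 2 / (z.2 - z.1)) *
          ENNReal.ofReal ((projDist t z) ^ p) ∂μ := by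
    intro t
    set ν := Measure.map (projDist t) ρ with hν
    have sect_meas : Measurable fun s => Finv ν s :=
      hFmeas.comp measurable_prodMk_left
    have step1 := lintegral_rpow_eq_lintegral_meas_lt_mul
      (volume.restrict (Set.Ioi (0 : ℝ)))
      (ae_of_all _ fun s => Finv_nonneg ν s) sect_meas.aemeasurable hp0
    have hid_nn : ∀ᵐ a ∂ν, 0 ≤ a := by
      rw [hν, ae_map_iff (measurable_projDist t).aemeasurable measurableSet_Ici]
      exact ae_of_all _ fun z => projDist_nonneg t z
    have step3 := lintegral_rpow_eq_lintegral_meas_lt_mul ν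
      hid_nn aemeasurable_id hp0
    calc ∫⁻ s in Set.Ioi (0 : ℝ), ENNReal.ofReal ((Finv ν s) ^ p)
        = ENNReal.ofReal p * ∫⁻ x in Set.Ioi (0 : ℝ),
            (volume.restrict (Set.Ioi (0 : ℝ))) {s | x < Finv ν s} *
              ENNReal.ofReal (x ^ (p - 1)) := step1
      _ ≤ ENNReal.ofReal p * ∫⁻ x in Set.Ioi (0 : ℝ),
            ν {a | x < a} * ENNReal.ofReal (x ^ (p - 1)) := by
          refine mul_le_mul_right (lintegral_mono_ae ?_) _
          filter_upwards [ae_restrict_mem measurableSet_Ioi] with x hx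
          exact mul_le_mul_left (meas_levelset_le ν hx) _
      _ = ∫⁻ a, ENNReal.ofReal (a ^ p) ∂ν := step3.symm
      _ = ∫⁻ z, ENNReal.ofReal ((projDist t z) ^ p) ∂ρ := by
          rw [hν]
          exact lintegral_map (f := fun a : ℝ => ENNReal.ofReal (a ^ p))
            ((measurable_id.pow measurable_const).ennreal_ofReal) (measurable_projDist t)
      _ = ∫⁻ z, ENNReal.ofReal (Real.sqrt 2 / (z.2 - z.1)) *
            ENNReal.ofReal ((projDist t z) ^ p) ∂μ := by
          rw [hρ]
          unfold normalizePM
          rw [lintegral_withDensity_eq_lintegral_mul μ hdens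
            (((measurable_projDist t).pow measurable_const).ennreal_ofReal)]
          rfl
  -- Tonelli and the rest
  calc ∫⁻ q : ℝ × ℝ, ENNReal.ofReal ((Finv (Measure.map (projDist q.1) ρ) q.2) ^ p)
        ∂((volume : Measure ℝ).prod (volume.restrict (Set.Ioi (0 : ℝ))))
      = ∫⁻ t, ∫⁻ s in Set.Ioi (0 : ℝ),
          ENNReal.ofReal ((Finv (Measure.map (projDist t) ρ) s) ^ p) ∂volume := by
        rw [lintegral_prod _ ((hFmeas.pow measurable_const).ennreal_ofReal.aemeasurable)]
    _ ≤ ∫⁻ t, ∫⁻ z, ENNReal.ofReal (Real.sqrt 2 / (z.2 - z.1)) *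
          ENNReal.ofReal ((projDist t z) ^ p) ∂μ ∂volume := lintegral_mono inner
    _ = ∫⁻ z, ∫⁻ t, ENNReal.ofReal (Real.sqrt 2 / (z.2 - z.1)) *
          ENNReal.ofReal ((projDist t z) ^ p) ∂volume ∂μ := by
        exact lintegral_lintegral_swap
          (((hdens.comp measurable_snd).mul hproj_pow).aemeasurable)
    _ = ∫⁻ z, ENNReal.ofReal (Real.sqrt 2 / (z.2 - z.1)) *
          ∫⁻ t, ENNReal.ofReal ((projDist t z) ^ p) ∂volume ∂μ := by
        refine lintegral_congr fun z => ?_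
        exact lintegral_const_mul _
          ((measurable_projDist_uncurry.comp (measurable_id.prodMk measurable_const)).pow
            measurable_const).ennreal_ofReal
    _ = ∫⁻ z, ENNReal.ofReal (Real.sqrt 2 / (z.2 - z.1)) *
          (ENNReal.ofReal (((z.2 - z.1) / Real.sqrt 2) ^ p) *
            ENNReal.ofReal (z.2 - z.1)) ∂μ := by
        refine lintegral_congr fun z => ?_
        congr 1
        have heq : (fun t => ENNReal.ofReal ((projDist t z) ^ p)) =
            Set.indicator (Set.Icc z.1 z.2)
              (fun _ => ENNReal.ofReal (((z.2 - z.1) / Real.sqrt 2) ^ p)) := by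
          funext t
          rw [Set.indicator_apply]
          by_cases h : z.1 ≤ t ∧ t ≤ z.2
          · simp [projDist, h, Set.mem_Icc]
          · simp [projDist, h, Set.mem_Icc, Real.zero_rpow hp0.ne']
        rw [heq, lintegral_indicator measurableSet_Icc, setLIntegral_const, Real.volume_Icc]
    _ = ∫⁻ z, ENNReal.ofReal (Real.sqrt 2) *
          ENNReal.ofReal (((z.2 - z.1) / Real.sqrt 2) ^ p) ∂μ := by
        have hae : ∀ᵐ z ∂μ, z.1 < z.2 := ae_iff.mpr hΩ
        refine lintegral_congr_ae ?_
        filter_upwards [hae] with z hz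
        have hd : (0 : ℝ) < z.2 - z.1 := sub_pos.mpr hz
        rw [mul_comm (ENNReal.ofReal (((z.2 - z.1) / Real.sqrt 2) ^ p)) _, ← mul_assoc,
          ← ENNReal.ofReal_mul (div_nonneg (Real.sqrt_nonneg 2) hd.le),
          div_mul_cancel₀ _ hd.ne']
    _ = ENNReal.ofReal (Real.sqrt 2) *
          ∫⁻ z, ENNReal.ofReal (((z.2 - z.1) / Real.sqrt 2) ^ p) ∂μ := by
        exact lintegral_const_mul _
          (((measurable_snd.sub measurable_fst).div_const _).pow
            measurable_const).ennreal_ofReal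

lemma integrable_pair (p : ℝ) (hp1 : 1 ≤ p) (μ ν : Measure (ℝ × ℝ))
    [SigmaFinite μ] [SigmaFinite ν]
    (hΩμ : μ {z : ℝ × ℝ | ¬ z.1 < z.2} = 0) (hΩν : ν {z : ℝ × ℝ | ¬ z.1 < z.2} = 0)
    (hpμ : ∫⁻ z, ENNReal.ofReal (((z.2 - z.1) / Real.sqrt 2) ^ p) ∂μ < ⊤)
    (hpν : ∫⁻ z, ENNReal.ofReal (((z.2 - z.1) / Real.sqrt 2) ^ p) ∂ν < ⊤) :
    Integrable (fun q : ℝ × ℝ =>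
        |Finv (Measure.map (projDist q.1) (normalizePM μ)) q.2 -
          Finv (Measure.map (projDist q.1) (normalizePM ν)) q.2| ^ p)
      ((volume : Measure ℝ).prod (volume.restrict (Set.Ioi (0 : ℝ)))) := by
  have hp0 : (0 : ℝ) < p := lt_of_lt_of_le one_pos hp1
  haveI : SigmaFinite (normalizePM μ) := by unfold normalizePM; infer_instance
  haveI : SigmaFinite (normalizePM ν) := by unfold normalizePM; infer_instance
  set Fμ : ℝ × ℝ → ℝ := fun q => Finv (Measure.map (projDist q.1) (normalizePM μ)) q.2
  set Fν : ℝ × ℝ → ℝ := fun q => Finv (Measure.map (projDist q.1) (normalizePM ν)) q.2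
  have hFμ : Measurable Fμ := measurable_Finv_proj _
  have hFν : Measurable Fν := measurable_Finv_proj _
  have hmeas : Measurable fun q => |Fμ q - Fν q| ^ p :=
    ((hFμ.sub hFν).abs).pow measurable_const
  refine ⟨hmeas.aestronglyMeasurable, ?_⟩
  rw [hasFiniteIntegral_iff_ofReal (ae_of_all _ fun q =>
    Real.rpow_nonneg (abs_nonneg _) p)]
  have hbound : ∀ q : ℝ × ℝ, ENNReal.ofReal (|Fμ q - Fν q| ^ p)
      ≤ ENNReal.ofReal ((Fμ q) ^ p) + ENNReal.ofReal ((Fν q) ^ p) := by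
    intro q
    have h1 : (0 : ℝ) ≤ Fμ q := Finv_nonneg _ _
    have h2 : (0 : ℝ) ≤ Fν q := Finv_nonneg _ _
    have habs : |Fμ q - Fν q| ≤ max (Fμ q) (Fν q) := by
      rw [abs_sub_le_iff]
      constructor
      · linarith [le_max_left (Fμ q) (Fν q)]
      · linarith [le_max_right (Fμ q) (Fν q)]
    have hmax : max (Fμ q) (Fν q) ^ p ≤ (Fμ q) ^ p + (Fν q) ^ p := by
      rcases max_cases (Fμ q) (Fν q) with ⟨h, -⟩ | ⟨h, -⟩ <;> rw [h]
      · nlinarith [Real.rpow_nonneg h2 p]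
      · nlinarith [Real.rpow_nonneg h1 p]
    calc ENNReal.ofReal (|Fμ q - Fν q| ^ p)
        ≤ ENNReal.ofReal ((Fμ q) ^ p + (Fν q) ^ p) :=
          ENNReal.ofReal_le_ofReal
            (le_trans (Real.rpow_le_rpow (abs_nonneg _) habs hp0.le) hmax)
      _ = ENNReal.ofReal ((Fμ q) ^ p) + ENNReal.ofReal ((Fν q) ^ p) :=
          ENNReal.ofReal_add (Real.rpow_nonneg h1 p) (Real.rpow_nonneg h2 p)
  calc ∫⁻ q, ENNReal.ofReal (|Fμ q - Fν q| ^ p)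
        ∂((volume : Measure ℝ).prod (volume.restrict (Set.Ioi (0 : ℝ))))
      ≤ ∫⁻ q, (ENNReal.ofReal ((Fμ q) ^ p) + ENNReal.ofReal ((Fν q) ^ p))
        ∂((volume : Measure ℝ).prod (volume.restrict (Set.Ioi (0 : ℝ)))) :=
        lintegral_mono hbound
    _ = (∫⁻ q, ENNReal.ofReal ((Fμ q) ^ p)
          ∂((volume : Measure ℝ).prod (volume.restrict (Set.Ioi (0 : ℝ))))) +
        ∫⁻ q, ENNReal.ofReal ((Fν q) ^ p)
          ∂((volume : Measure ℝ).prod (volume.restrict (Set.Ioi (0 : ℝ)))) :=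
        lintegral_add_left ((hFμ.pow measurable_const).ennreal_ofReal) _
    _ < ⊤ := by
        apply ENNReal.add_lt_top.mpr
        constructor
        · exact lt_of_le_of_lt (key_finiteness p hp1 μ hΩμ)
            (ENNReal.mul_lt_top ENNReal.ofReal_lt_top hpμ)
        · exact lt_of_le_of_lt (key_finiteness p hp1 ν hΩν)
            (ENNReal.mul_lt_top ENNReal.ofReal_lt_top hpν)

/-- `SFG_p^p(μ,ν) = (1/√2^p) ∫_ℝ ∫_{ℝ₊} |F_{π_t#μ̃}⁻¹(s) − F_{π_t#ν̃}⁻¹(s)|^p ds dt`. -/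
noncomputable def SFGpow (p : ℝ) (μ ν : Measure (ℝ × ℝ)) : ℝ :=
  (1 / Real.sqrt 2 ^ p) *
    ∫ t : ℝ, ∫ s in Set.Ioi (0 : ℝ),
      |Finv (Measure.map (projDist t) (normalizePM μ)) s -
        Finv (Measure.map (projDist t) (normalizePM ν)) s| ^ p

/-- If, for `1 ≤ p ≤ 2`, the function `(x,y) ↦ |x−y|^p` is conditionally negative definite on
`ℝ`, then for measures `μ1,…,μn` on the half-plane with finite `p`-persistence and weights
`a1,…,an` with `Σ aᵢ = 0`, one has `Σᵢⱼ aᵢaⱼ SFG_p^p(μᵢ,μⱼ) ≤ 0`. -/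
theorem stmt7 (p : ℝ) (hp1 : 1 ≤ p) (hp2 : p ≤ 2)
    (hcnd : ∀ (n : ℕ) (x : Fin n → ℝ) (a : Fin n → ℝ), (∑ i, a i) = 0 →
      ∑ i, ∑ j, a i * a j * |x i - x j| ^ p ≤ 0)
    (n : ℕ) (μ : Fin n → Measure (ℝ × ℝ))
    (hΩ : ∀ i, μ i {z : ℝ × ℝ | ¬ z.1 < z.2} = 0)
    (hpers : ∀ i, ∫⁻ z, ENNReal.ofReal (((z.2 - z.1) / Real.sqrt 2) ^ p) ∂(μ i) < ⊤)
    (a : Fin n → ℝ) (ha : ∑ i, a i = 0) :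
    ∑ i, ∑ j, a i * a j * SFGpow p (μ i) (μ j) ≤ 0 := by
  have hp0 : (0 : ℝ) < p := lt_of_lt_of_le one_pos hp1
  have hsf : ∀ i, SigmaFinite (μ i) := fun i =>
    sigmaFinite_of_pers p hp0 (μ i) (hΩ i) (hpers i)
  set Q : Measure (ℝ × ℝ) :=
    (volume : Measure ℝ).prod (volume.restrict (Set.Ioi (0 : ℝ))) with hQ
  set F : Fin n → ℝ × ℝ → ℝ :=
    fun i q => Finv (Measure.map (projDist q.1) (normalizePM (μ i))) q.2 with hF
  have hInt : ∀ i j, Integrable (fun q => |F i q - F j q| ^ p) Q := by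
    intro i j
    haveI := hsf i; haveI := hsf j
    exact integrable_pair p hp1 (μ i) (μ j) (hΩ i) (hΩ j) (hpers i) (hpers j)
  have hSFG : ∀ i j, SFGpow p (μ i) (μ j) =
      (1 / Real.sqrt 2 ^ p) * ∫ q, |F i q - F j q| ^ p ∂Q := by
    intro i j
    unfold SFGpow
    congr 1
    exact integral_integral (f := fun t s => |F i (t, s) - F j (t, s)| ^ p) (hInt i j)
  have key : ∀ i j, a i * a j * SFGpow p (μ i) (μ j) =
      (1 / Real.sqrt 2 ^ p) * ∫ q, (a i * a j) * |F i q - F j q| ^ p ∂Q := by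
    intro i j
    rw [hSFG i j, integral_const_mul]
    ring
  have hswap : ∫ q, ∑ i, ∑ j, (a i * a j) * |F i q - F j q| ^ p ∂Q =
      ∑ i, ∑ j, ∫ q, (a i * a j) * |F i q - F j q| ^ p ∂Q := by
    rw [integral_finset_sum _ (fun i _ =>
      integrable_finset_sum _ (fun j _ => (hInt i j).const_mul _))]
    exact Finset.sum_congr rfl fun i _ =>
      integral_finset_sum _ (fun j _ => (hInt i j).const_mul _)
  have hmain : ∑ i, ∑ j, a i * a j * SFGpow p (μ i) (μ j) =
      (1 / Real.sqrt 2 ^ p) * ∫ q, ∑ i, ∑ j, (a i * a j) * |F i q - F j q| ^ p ∂Q := by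
    rw [hswap, Finset.mul_sum]
    refine Finset.sum_congr rfl fun i _ => ?_
    rw [Finset.mul_sum]
    exact Finset.sum_congr rfl fun j _ => key i j
  rw [hmain]
  apply mul_nonpos_of_nonneg_of_nonpos
  · positivity
  · exact integral_nonpos fun q => hcnd n (fun i => F i q) a ha
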